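/- If A ⊆ ℕ^ℕ is open in the product topology on ℕ^ℕ (with ℕ discrete), then the Gale–Stewart game with payoff set A is determined: either player I has a winning strategy or player II has a winning strategy. -/
import Mathlib

/-- The finite position given by the first `n` moves of the infinite play `x`. -/
def position (x : ℕ → ℕ) (n : ℕ) : List ℕ := List.ofFn fun i : Fin n => x i.val

/-- `x` is an infinite play in which player I (moving at even indices) follows
the strategy `σ`, i.e. each even-indexed move is the one `σ` assigns to the
current finite position. Player II's moves are arbitrary. -/
def FollowsI (σ : List ℕ → ℕ) (x : ℕ → ℕ) : Prop :=
  ∀ n : ℕ, Even n → x n = σ (position x n)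

/-- `x` is an infinite play in which player II (moving at odd indices) follows
the strategy `τ`. Player I's moves are arbitrary. -/
def FollowsII (τ : List ℕ → ℕ) (x : ℕ → ℕ) : Prop :=
  ∀ n : ℕ, Odd n → x n = τ (position x n)

/-- `σ` is a winning strategy for player I in the Gale–Stewart game with payoff
set `A`: every play in which I follows `σ` lands in `A`. -/
def WinningStratI (A : Set (ℕ → ℕ)) (σ : List ℕ → ℕ) : Prop :=
  ∀ x : ℕ → ℕ, FollowsI σ x → x ∈ A

/-- `τ` is a winning strategy for player II in the Gale–Stewart game with payoff
set `A`: every play in which II follows `τ` avoids `A`. -/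
def WinningStratII (A : Set (ℕ → ℕ)) (τ : List ℕ → ℕ) : Prop :=
  ∀ x : ℕ → ℕ, FollowsII τ x → x ∉ A

/-- The Gale–Stewart game with payoff set `A` is determined: one of the two
players has a winning strategy. -/
def Determined (A : Set (ℕ → ℕ)) : Prop :=
  (∃ σ, WinningStratI A σ) ∨ (∃ τ, WinningStratII A τ)

lemma position_length (x : ℕ → ℕ) (n : ℕ) : (position x n).length = n := by
  simp [position]

lemma position_zero (x : ℕ → ℕ) : position x 0 = [] := rfl

lemma position_succ (x : ℕ → ℕ) (n : ℕ) :
    position x (n+1) = position x n ++ [x n] := by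
  rw [position, List.ofFn_succ', List.concat_eq_append]
  simp [position]

lemma position_getD (x : ℕ → ℕ) {m n : ℕ} (h : m < n) :
    (position x n).getD m 0 = x m := by
  rw [List.getD_eq_getElem _ _ (by simpa [position_length] using h)]
  simp [position]

/-- Player I has a strategy winning every play that extends the position `p`. -/
def WinFrom (A : Set (ℕ → ℕ)) (p : List ℕ) : Prop :=
  ∃ σ : List ℕ → ℕ, ∀ x : ℕ → ℕ, position x p.length = p →
    (∀ n, p.length ≤ n → Even n → x n = σ (position x n)) → x ∈ A

lemma winFrom_of_cyl {A : Set (ℕ → ℕ)} {p : List ℕ}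
    (h : ∀ y : ℕ → ℕ, position y p.length = p → y ∈ A) : WinFrom A p :=
  ⟨fun _ => 0, fun x hx _ => h x hx⟩

/-- If it's I's turn at `p` and I can win from `p ++ [a]`, then I can win from `p`. -/
lemma winFrom_of_even {A : Set (ℕ → ℕ)} {p : List ℕ} (hp : Even p.length)
    {a : ℕ} (h : WinFrom A (p ++ [a])) : WinFrom A p := by
  obtain ⟨σ', h⟩ := h
  refine ⟨fun q => if q.length = p.length then a else σ' q, fun x hx hf => ?_⟩
  have hxa : x p.length = a := by
    have h0 := hf p.length le_rfl hp
    dsimp only at h0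
    rwa [position_length, if_pos rfl] at h0
  have hext : position x (p ++ [a]).length = p ++ [a] := by
    simp only [List.length_append, List.length_singleton]
    rw [position_succ, hx, hxa]
  refine h x hext ?_
  intro n hn he
  simp only [List.length_append, List.length_singleton] at hn
  have h1 := hf n (le_trans (Nat.le_succ _) hn) he
  dsimp only at h1
  rw [position_length] at h1
  rwa [if_neg (by omega)] at h1

/-- If it's II's turn at `p` and I can win after every move of II,
then I can win from `p`. -/
lemma winFrom_of_odd {A : Set (ℕ → ℕ)} {p : List ℕ} (hp : Odd p.length)
    (h : ∀ b : ℕ, WinFrom A (p ++ [b])) : WinFrom A p := by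
  choose σ hσ using h
  refine ⟨fun q => σ (q.getD p.length 0) q, fun x hx hf => ?_⟩
  set b := x p.length with hb
  have hext : position x (p ++ [b]).length = p ++ [b] := by
    simp only [List.length_append, List.length_singleton]
    rw [position_succ, hx]
  refine hσ b x hext ?_
  intro n hn he
  simp only [List.length_append, List.length_singleton] at hn
  have h1 := hf n (le_trans (Nat.le_succ _) hn) he
  dsimp only at h1
  rwa [position_getD x (lt_of_lt_of_le (Nat.lt_succ_self _) hn), ← hb] at h1

lemma exists_cyl {A : Set (ℕ → ℕ)} (hA : IsOpen A) {x : ℕ → ℕ} (hx : x ∈ A) :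
    ∃ n : ℕ, ∀ y : ℕ → ℕ, position y n = position x n → y ∈ A := by
  rw [isOpen_pi_iff] at hA
  obtain ⟨I, u, hu, hsub⟩ := hA x hx
  refine ⟨I.sup id + 1, fun y hy => hsub ?_⟩
  have hagree : ∀ i < I.sup id + 1, y i = x i := by
    intro i hi
    have h1 : (position y (I.sup id + 1)).getD i 0 = (position x (I.sup id + 1)).getD i 0 :=
      congrArg (fun l => l.getD i 0) hy
    rwa [position_getD _ hi, position_getD _ hi] at h1
  intro i hi
  rw [hagree i (Nat.lt_succ_of_le (Finset.le_sup (f := id) hi))]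
  exact (hu i hi).2

/-- Gale–Stewart: every open set (in the product topology on `ℕ → ℕ`,
with `ℕ` discrete) is determined. -/
theorem open_determined (A : Set (ℕ → ℕ)) (hA : IsOpen A) : Determined A := by
  classical
  by_cases h : WinFrom A []
  · obtain ⟨σ, hσ⟩ := h
    exact Or.inl ⟨σ, fun x hx => hσ x (position_zero x) (fun n _ he => hx n he)⟩
  · refine Or.inr ⟨fun p => if hp : ∃ b, ¬ WinFrom A (p ++ [b]) then hp.choose else 0,
      fun x hx hxA => ?_⟩
    have key : ∀ n, ¬ WinFrom A (position x n) := by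
      intro n
      induction n with
      | zero => simpa [position_zero] using h
      | succ n ih =>
        rw [position_succ]
        rcases Nat.even_or_odd n with he | ho
        · intro hw
          exact ih (winFrom_of_even (by rwa [position_length]) hw)
        · have hex : ∃ b, ¬ WinFrom A (position x n ++ [b]) := by
            by_contra hc
            push_neg at hc
            exact ih (winFrom_of_odd (by rwa [position_length]) hc)
          have hxn := hx n ho
          dsimp only at hxn
          rw [hxn, dif_pos hex]
          exact hex.choose_spec
    obtain ⟨n, hn⟩ := exists_cyl hA hxA
    exact key n (winFrom_of_cyl (by rw [position_length]; exact hn))
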